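/- Let 𝕋 = {z ∈ ℂ : |z| = 1}, let m₁ : 𝕋 → ℂ be continuous with |m₁(z)|² + |m₁(−z)|² = 2 for all z, and set m₂(z) = z·conj(m₁(−z)). Suppose m₂' : 𝕋 → ℂ is continuous, satisfies |m₂'(z)|² + |m₂'(−z)|² = 2 for all z, and conj(m₁(z))·m₂'(z) + conj(m₁(−z))·m₂'(−z) = 0 for all z (i.e., {m₁, m₂'} is also a filter bank). Then there exists a continuous function θ : 𝕋 → ℂ with |θ(u)| = 1 for all u ∈ 𝕋 such that m₂'(z) = θ(z²)·m₂(z) for all z ∈ 𝕋. -/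

import Mathlib

/-!
Pointwise, the conditions say that for `‖z‖ = 1` the vectors `(m₁(z), m₁(−z))` and
`(m₂'(z), m₂'(−z))` in `ℂ²` are orthogonal and of length `√2`, and so is `(m₂(z), m₂(−z))`;
since the orthogonal complement of a nonzero vector in `ℂ²` is a line, `m₂'(z) = λ(z) m₂(z)` and
`m₂'(−z) = λ(z) m₂(−z)` with `|λ(z)| = 1`, where `λ` is given by an explicit continuous formula.
That formula is even in `z`, and an even function continuous on the circle factors continuously
through `z ↦ z²`, because squaring is a quotient map of the (compact, Hausdorff) circle onto itself.
-/

open ComplexConjugate Metric Topology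

theorem exists_sq_eq_of_mem_sphere {u : ℂ} (hu : u ∈ sphere (0 : ℂ) 1) :
    ∃ z ∈ sphere (0 : ℂ) 1, z ^ 2 = u := by
  have hsq : (u ^ (2⁻¹ : ℂ)) ^ 2 = u := Complex.cpow_ofNat_inv_pow u 2
  refine ⟨u ^ (2⁻¹ : ℂ), ?_, hsq⟩
  rw [mem_sphere_zero_iff_norm] at hu ⊢
  have hnorm : ‖u ^ (2⁻¹ : ℂ)‖ ^ 2 = 1 := by rw [← norm_pow, hsq, hu]
  exact (pow_eq_one_iff_of_nonneg (norm_nonneg _) two_ne_zero).1 hnorm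

theorem isQuotientMap_sphere_sq :
    IsQuotientMap (fun z : sphere (0 : ℂ) 1 => (⟨z ^ 2, by simp⟩ : sphere (0 : ℂ) 1)) := by
  refine .of_surjective_continuous (fun u => ?_) (by fun_prop)
  obtain ⟨z, hz, hzu⟩ := exists_sq_eq_of_mem_sphere u.2
  exact ⟨⟨z, hz⟩, Subtype.ext hzu⟩

theorem exists_continuousOn_sphere_comp_sq {Z : Type*} [TopologicalSpace Z] {f : ℂ → Z}
    (hf : ContinuousOn f (sphere 0 1)) (heven : ∀ z ∈ sphere (0 : ℂ) 1, f (-z) = f z) :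
    ∃ θ : ℂ → Z, ContinuousOn θ (sphere 0 1) ∧ ∀ z ∈ sphere (0 : ℂ) 1, θ (z ^ 2) = f z := by
  have hθ : ∀ z ∈ sphere (0 : ℂ) 1, f ((z ^ 2) ^ (2⁻¹ : ℂ)) = f z := by
    intro z hz
    have hsq : ((z ^ 2) ^ (2⁻¹ : ℂ)) ^ 2 = z ^ 2 := Complex.cpow_ofNat_inv_pow (z ^ 2) 2
    rcases sq_eq_sq_iff_eq_or_eq_neg.1 hsq with h | h
    · rw [h]
    · rw [h, heven z hz]
  refine ⟨fun u => f (u ^ (2⁻¹ : ℂ)), ?_, hθ⟩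
  rw [continuousOn_iff_continuous_domRestrict, isQuotientMap_sphere_sq.continuous_iff]
  convert continuousOn_iff_continuous_domRestrict.1 hf using 1
  funext z
  exact hθ z z.2

/-- Where `m₂(z) = z conj (m₁(−z))` does not vanish this is `m₂'(z) / m₂(z)`; the closed form is
defined and continuous everywhere. -/
noncomputable def highPassQuotient (m₁ m₂' : ℂ → ℂ) (z : ℂ) : ℂ :=
  conj z * (m₁ (-z) * m₂' z - m₁ z * m₂' (-z)) / 2

section highPassQuotient

variable {m₁ m₂' : ℂ → ℂ}

theorem highPassQuotient_neg (z : ℂ) :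
    highPassQuotient m₁ m₂' (-z) = highPassQuotient m₁ m₂' z := by
  simp only [highPassQuotient, neg_neg, map_neg]
  ring

theorem continuousOn_highPassQuotient (hm₁ : ContinuousOn m₁ (sphere 0 1))
    (hm₂' : ContinuousOn m₂' (sphere 0 1)) :
    ContinuousOn (highPassQuotient m₁ m₂') (sphere 0 1) := by
  have hneg : Set.MapsTo (fun z : ℂ => -z) (sphere 0 1) (sphere 0 1) :=
    fun z hz => by simpa using hz
  unfold highPassQuotient
  exact (Complex.continuous_conj.continuousOn.mul
    (((hm₁.comp continuous_neg.continuousOn hneg).mul hm₂').sub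
      (hm₁.mul (hm₂'.comp continuous_neg.continuousOn hneg)))).div_const 2

theorem eq_highPassQuotient_mul {z : ℂ} (hz : ‖z‖ = 1) (h₁ : ‖m₁ z‖ ^ 2 + ‖m₁ (-z)‖ ^ 2 = 2)
    (horth : conj (m₁ z) * m₂' z + conj (m₁ (-z)) * m₂' (-z) = 0) :
    m₂' z = highPassQuotient m₁ m₂' z * (z * conj (m₁ (-z))) := by
  have hm₁ : conj (m₁ z) * m₁ z + conj (m₁ (-z)) * m₁ (-z) = 2 := by
    simp only [Complex.conj_mul', ← Complex.ofReal_pow, ← Complex.ofReal_add, h₁]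
    norm_num
  have hz' : z * conj z = 1 := by simp [Complex.mul_conj', hz]
  unfold highPassQuotient
  linear_combination (-(m₂' z) / 2) * hm₁ + (m₁ z / 2) * horth -
    ((m₁ (-z) * m₂' z - m₁ z * m₂' (-z)) * conj (m₁ (-z)) / 2) * hz'

theorem norm_highPassQuotient {z : ℂ} (hz : ‖z‖ = 1) (h₁ : ‖m₁ z‖ ^ 2 + ‖m₁ (-z)‖ ^ 2 = 2)
    (h₂' : ‖m₂' z‖ ^ 2 + ‖m₂' (-z)‖ ^ 2 = 2)
    (horth : conj (m₁ z) * m₂' z + conj (m₁ (-z)) * m₂' (-z) = 0) :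
    ‖highPassQuotient m₁ m₂' z‖ = 1 := by
  have hpos := eq_highPassQuotient_mul hz h₁ horth
  have hneg := eq_highPassQuotient_mul (m₁ := m₁) (m₂' := m₂') (z := -z) (by rwa [norm_neg])
    (by rwa [neg_neg, add_comm]) (by rwa [neg_neg, add_comm])
  rw [neg_neg, highPassQuotient_neg] at hneg
  rw [hpos, hneg] at h₂'
  simp only [norm_mul, norm_neg, Complex.norm_conj, hz, one_mul] at h₂'
  have hsq : ‖highPassQuotient m₁ m₂' z‖ ^ 2 = 1 := by
    linear_combination h₂' / 2 - (‖highPassQuotient m₁ m₂' z‖ ^ 2 / 2) * h₁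
  exact (pow_eq_one_iff_of_nonneg (norm_nonneg _) two_ne_zero).1 hsq

end highPassQuotient

theorem stmt6 (m₁ m₂ m₂' : ℂ → ℂ)
    (hm₁c : ContinuousOn m₁ (Metric.sphere (0 : ℂ) 1))
    (h₁ : ∀ z : ℂ, ‖z‖ = 1 →
      ‖m₁ z‖ ^ 2 + ‖m₁ (-z)‖ ^ 2 = 2)
    (h₂ : ∀ z : ℂ, m₂ z = z * conj (m₁ (-z)))
    (hm₂'c : ContinuousOn m₂' (Metric.sphere (0 : ℂ) 1))
    (h₂' : ∀ z : ℂ, ‖z‖ = 1 →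
      ‖m₂' z‖ ^ 2 + ‖m₂' (-z)‖ ^ 2 = 2)
    (horth : ∀ z : ℂ, ‖z‖ = 1 →
      conj (m₁ z) * m₂' z + conj (m₁ (-z)) * m₂' (-z) = 0) :
    ∃ θ : ℂ → ℂ, ContinuousOn θ (Metric.sphere (0 : ℂ) 1) ∧
      (∀ u : ℂ, ‖u‖ = 1 → ‖θ u‖ = 1) ∧
      (∀ z : ℂ, ‖z‖ = 1 → m₂' z = θ (z ^ 2) * m₂ z) := by
  obtain ⟨θ, hθc, hθ⟩ := exists_continuousOn_sphere_comp_sq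
    (continuousOn_highPassQuotient hm₁c hm₂'c) fun z _ => highPassQuotient_neg z
  refine ⟨θ, hθc, fun u hu => ?_, fun z hz => ?_⟩
  · obtain ⟨z, hz, rfl⟩ := exists_sq_eq_of_mem_sphere (mem_sphere_zero_iff_norm.2 hu)
    rw [hθ z hz]
    rw [mem_sphere_zero_iff_norm] at hz
    exact norm_highPassQuotient hz (h₁ z hz) (h₂' z hz) (horth z hz)
  · rw [hθ z (mem_sphere_zero_iff_norm.2 hz), h₂]
    exact eq_highPassQuotient_mul hz (h₁ z hz) (horth z hz)
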